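/- S_K(λ) is generated as a K-algebra by the elements b(2^0), b(2^1), …, b(2^t), where t is the unique natural number with 2^{t-1} < λ₂ ≤ 2^t. -/

import Mathlib

/-!
Every `0 < k ≤ λ₂` is `2 ^ s + r` with `r < 2 ^ s`. In `b r * b (2 ^ s)` the coefficient of
`b (2 ^ s + r)` is `C(2 ^ s + r, r) ^ 2`, which is odd by Lucas's theorem, and every other term is
some `b (2 ^ s + k)` with `k < r`. So by strong induction on `k` each `b k` lies in the subalgebra
generated by the `b (2 ^ s)`; the induction starts because `b 0` acts as the identity on a spanning set,
hence `b 0 = 1`.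
-/

open Finset

theorem Nat.odd_choose_two_pow_add {s r : ℕ} (hr : r < 2 ^ s) : Odd ((2 ^ s + r).choose r) := by
  induction s generalizing r with
  | zero => simp [show r = 0 by omega]
  | succ s ih =>
    have lucas : (2 ^ (s + 1) + r).choose r ≡ (2 ^ s + r / 2).choose (r / 2) [MOD 2] := by
      have h := Choose.choose_modEq_choose_mod_mul_choose_div_nat (n := 2 ^ (s + 1) + r) (k := r)
        (p := 2)
      rwa [show (2 ^ (s + 1) + r) % 2 = r % 2 by omega,
        show (2 ^ (s + 1) + r) / 2 = 2 ^ s + r / 2 by omega, Nat.choose_self, one_mul] at h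
    exact Nat.odd_iff.mpr (Eq.trans lucas (Nat.odd_iff.mp (ih (r := r / 2) (by omega))))

theorem Nat.exists_eq_two_pow_add {k : ℕ} (hk : 0 < k) : ∃ s r, r < 2 ^ s ∧ k = 2 ^ s + r := by
  have hlo := Nat.pow_log_le_self 2 hk.ne'
  have hhi := Nat.lt_pow_succ_log_self one_lt_two k
  rw [pow_succ] at hhi
  exact ⟨Nat.log 2 k, k - 2 ^ Nat.log 2 k, by omega, by omega⟩

theorem eq_one_of_forall_mul_eq_self {K S ι : Type*} [CommSemiring K] [Semiring S] [Algebra K S]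
    {v : ι → S} (hv : Submodule.span K (Set.range v) = ⊤) {e : S} (he : ∀ i, e * v i = v i) :
    e = 1 := by
  have : LinearMap.mulLeft K e = LinearMap.id := LinearMap.ext_on_range hv he
  simpa using LinearMap.congr_fun this 1

section ProductFormula

variable (K : Type*) {S : Type*} [CommRing K] [Ring S] [Algebra K S]

/-- The multiplication rule of `S_K(λ)` on `b 0, …, b n`, with `n = λ₂` and `m = λ₁ - λ₂`. -/
def HasProductFormula (m n : ℕ) (b : ℕ → S) : Prop :=
  ∀ i j : ℕ, i ≤ n → j ≤ n →
    b i * b j = ∑ k ∈ range (i + 1),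
      ((Nat.choose (j + k) i * Nat.choose (j + k) k * Nat.choose (m + j + i) (i - k) : ℕ) : K) •
        b (j + k)

namespace HasProductFormula

variable {K} {m n : ℕ} {b : ℕ → S}

theorem zero_mul (h : HasProductFormula K m n b) {j : ℕ} (hj : j ≤ n) : b 0 * b j = b j := by
  simpa using h 0 j (Nat.zero_le n) hj

theorem zero_eq_one (h : HasProductFormula K m n b)
    (hspan : Submodule.span K (Set.range fun i : Fin (n + 1) => b i) = ⊤) : b 0 = 1 :=
  eq_one_of_forall_mul_eq_self hspan fun i => h.zero_mul i.is_le

theorem mul_two_pow [CharP K 2] (h : HasProductFormula K m n b) {s r : ℕ} (hr : r < 2 ^ s)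
    (hn : 2 ^ s + r ≤ n) :
    b r * b (2 ^ s) = b (2 ^ s + r) + ∑ k ∈ range r,
      ((Nat.choose (2 ^ s + k) r * Nat.choose (2 ^ s + k) k *
        Nat.choose (m + 2 ^ s + r) (r - k) : ℕ) : K) • b (2 ^ s + k) := by
  have hodd := Nat.odd_choose_two_pow_add hr
  have hlead : ((Nat.choose (2 ^ s + r) r * Nat.choose (2 ^ s + r) r *
      Nat.choose (m + 2 ^ s + r) (r - r) : ℕ) : K) = 1 := by
    refine natCast_eq_one_of_odd_of_two_eq_zero ?_ CharTwo.two_eq_zero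
    simpa using hodd.mul hodd
  rw [h r (2 ^ s) (by omega) (by omega), sum_range_succ, hlead, one_smul, add_comm]

theorem mem_adjoin [CharP K 2] (h : HasProductFormula K m n b) (hb0 : b 0 = 1) {k : ℕ}
    (hk : k ≤ n) : b k ∈ Algebra.adjoin K ((fun s => b (2 ^ s)) '' {s | 2 ^ s ≤ n}) := by
  induction k using Nat.strong_induction_on with
  | _ k ih =>
  set A := Algebra.adjoin K ((fun s => b (2 ^ s)) '' {s | 2 ^ s ≤ n})
  rcases Nat.eq_zero_or_pos k with rfl | hk0
  · rw [hb0]; exact A.one_mem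
  obtain ⟨s, r, hr, rfl⟩ := Nat.exists_eq_two_pow_add hk0
  have hpow : b (2 ^ s) ∈ A := Algebra.subset_adjoin ⟨s, (by omega : 2 ^ s ≤ n), rfl⟩
  have hpos : 0 < 2 ^ s := Nat.two_pow_pos s
  rw [eq_sub_of_add_eq (h.mul_two_pow hr hk).symm]
  refine sub_mem (mul_mem (ih r (by omega) (by omega)) hpow) (sum_mem fun j hj => ?_)
  have hj := mem_range.mp hj
  exact A.smul_mem (ih (2 ^ s + j) (by omega) (by omega)) _

end HasProductFormula

end ProductFormula

theorem SK_generated_general {K : Type*} [Field K] [CharP K 2]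
    {S : Type*} [CommRing S] [Algebra K S]
    (lam2 : ℕ) (m : ℕ)
    (b : ℕ → S)
    (hspan : Submodule.span K (Set.range fun i : Fin (lam2 + 1) => b i) = ⊤)
    (hmul : ∀ i j : ℕ, i ≤ lam2 → j ≤ lam2 →
      b i * b j = ∑ k ∈ Finset.range (i + 1),
        ((Nat.choose (j + k) i * Nat.choose (j + k) k *
          Nat.choose (m + j + i) (i - k) : ℕ) : K) • b (j + k)) :
    ∀ t : ℕ, 1 ≤ lam2 → lam2 ≤ 2 ^ t → (∀ s : ℕ, lam2 ≤ 2 ^ s → t ≤ s) →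
      Algebra.adjoin K ((fun s : ℕ => b (2 ^ s)) '' {s | s ≤ t}) = ⊤ := by
  intro t _ hlam2 _
  have h : HasProductFormula K m lam2 b := hmul
  have hpowers : {s | 2 ^ s ≤ lam2} ⊆ {s | s ≤ t} := fun s hs =>
    (Nat.pow_le_pow_iff_right one_lt_two).mp (le_trans hs hlam2)
  have hspan_le : Submodule.span K (Set.range fun i : Fin (lam2 + 1) => b i) ≤
      Subalgebra.toSubmodule (Algebra.adjoin K ((fun s : ℕ => b (2 ^ s)) '' {s | s ≤ t})) := by
    rw [Submodule.span_le]
    rintro _ ⟨i, rfl⟩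
    exact Algebra.adjoin_mono (Set.image_mono hpowers)
      (h.mem_adjoin (h.zero_eq_one hspan) i.is_le)
  rw [hspan, top_le_iff, Algebra.toSubmodule_eq_top] at hspan_le
  exact hspan_le

theorem SK_generated {K : Type*} [Field K] [CharP K 2]
    {S : Type*} [CommRing S] [Algebra K S]
    (lam1 lam2 : ℕ) (hlam : lam2 ≤ lam1) (m : ℕ) (hm : m = lam1 - lam2)
    (b : ℕ → S)
    (hindep : LinearIndependent K (fun i : Fin (lam2 + 1) => b i))
    (hspan : Submodule.span K (Set.range fun i : Fin (lam2 + 1) => b i) = ⊤)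
    (hzero : ∀ a : ℕ, lam2 < a → b a = 0)
    (hmul : ∀ i j : ℕ, i ≤ lam2 → j ≤ lam2 →
      b i * b j = ∑ k ∈ Finset.range (i + 1),
        ((Nat.choose (j + k) i * Nat.choose (j + k) k *
          Nat.choose (m + j + i) (i - k) : ℕ) : K) • b (j + k)) :
    ∀ t : ℕ, 1 ≤ lam2 → lam2 ≤ 2 ^ t → (∀ s : ℕ, lam2 ≤ 2 ^ s → t ≤ s) →
      Algebra.adjoin K ((fun s : ℕ => b (2 ^ s)) '' {s | s ≤ t}) = ⊤ :=
  SK_generated_general lam2 m b hspan hmul
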